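/- arXiv:math/0601302 — 4 statements merged into one kernel-verified Lean document; each statement's English description precedes it below -/
import Mathlib

section
/- For an idempotent matrix-valued function P of two variables, the equation [∂_L∂_R P, P] = 0 is equivalent to ∂_L[∂_R P, P] + ∂_R[∂_L P, P] = 0 (the conservation-law form of the Euler–Lagrange equations). -/
/-!
By the Leibniz rule, `∂_L[∂_R P, P] + ∂_R[∂_L P, P] = 2[∂_L∂_R P, P] + [∂_R P, ∂_L P] + [∂_L P, ∂_R P]`,
and the last two brackets cancel by antisymmetry.
-/

attribute [local instance] Matrix.frobeniusNormedAddCommGroup Matrix.frobeniusNormedSpace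
  Matrix.frobeniusNormedRing Matrix.frobeniusNormedAlgebra

theorem HasDerivAt.lie {𝕜 𝔸 : Type*} [NontriviallyNormedField 𝕜] [NormedRing 𝔸]
    [NormedAlgebra 𝕜 𝔸] {f g : 𝕜 → 𝔸} {f' g' : 𝔸} {x : 𝕜}
    (hf : HasDerivAt f f' x) (hg : HasDerivAt g g' x) :
    HasDerivAt (fun s => ⁅f s, g s⁆) (⁅f', g x⁆ + ⁅f x, g'⁆) x :=
  ((hf.fun_mul hg).fun_sub (hg.fun_mul hf)).congr_deriv (by simp only [Ring.lie_def]; abel)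

theorem stmt_2_general {N : ℕ} (P PL PR PLR : ℝ × ℝ → Matrix (Fin N) (Fin N) ℂ)
    (hPL : ∀ x : ℝ × ℝ, HasDerivAt (fun s => P (s, x.2)) (PL x) x.1)
    (hPR : ∀ x : ℝ × ℝ, HasDerivAt (fun s => P (x.1, s)) (PR x) x.2)
    (hPLR : ∀ x : ℝ × ℝ, HasDerivAt (fun s => PR (s, x.2)) (PLR x) x.1)
    (hPRL : ∀ x : ℝ × ℝ, HasDerivAt (fun s => PL (x.1, s)) (PLR x) x.2)
    (x : ℝ × ℝ) :
    PLR x * P x = P x * PLR x ↔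
      ∀ DL DR : Matrix (Fin N) (Fin N) ℂ,
        HasDerivAt (fun s => PR (s, x.2) * P (s, x.2) - P (s, x.2) * PR (s, x.2)) DL x.1 →
        HasDerivAt (fun s => PL (x.1, s) * P (x.1, s) - P (x.1, s) * PL (x.1, s)) DR x.2 →
        DL + DR = 0 := by
  have hL : HasDerivAt (fun s => PR (s, x.2) * P (s, x.2) - P (s, x.2) * PR (s, x.2))
      (⁅PLR x, P x⁆ + ⁅PR x, PL x⁆) x.1 := (hPLR x).lie (hPL x)
  have hR : HasDerivAt (fun s => PL (x.1, s) * P (x.1, s) - P (x.1, s) * PL (x.1, s))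
      (⁅PLR x, P x⁆ + ⁅PL x, PR x⁆) x.2 := (hPRL x).lie (hPR x)
  have hsum : (⁅PLR x, P x⁆ + ⁅PR x, PL x⁆) + (⁅PLR x, P x⁆ + ⁅PL x, PR x⁆) =
      (2 : ℂ) • ⁅PLR x, P x⁆ := by
    simp only [Ring.lie_def, two_smul]
    abel
  change Commute (PLR x) (P x) ↔ _
  rw [commute_iff_lie_eq, ← smul_eq_zero_iff_right (two_ne_zero : (2 : ℂ) ≠ 0), ← hsum]
  refine ⟨fun h DL DR hDL hDR => ?_, fun h => h _ _ hL hR⟩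
  rwa [hDL.unique hL, hDR.unique hR]

/-- For an idempotent matrix-valued function P of two variables (C²),
[∂_L∂_R P, P] = 0 iff ∂_L[∂_R P, P] + ∂_R[∂_L P, P] = 0 at that point. -/
theorem stmt_2 {N : ℕ} (P PL PR PLR : ℝ × ℝ → Matrix (Fin N) (Fin N) ℂ)
    (hPL : ∀ x : ℝ × ℝ, HasDerivAt (fun s => P (s, x.2)) (PL x) x.1)
    (hPR : ∀ x : ℝ × ℝ, HasDerivAt (fun s => P (x.1, s)) (PR x) x.2)
    (hPLR : ∀ x : ℝ × ℝ, HasDerivAt (fun s => PR (s, x.2)) (PLR x) x.1)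
    (hPRL : ∀ x : ℝ × ℝ, HasDerivAt (fun s => PL (x.1, s)) (PLR x) x.2)
    (hidem : ∀ x, P x * P x = P x) (x : ℝ × ℝ) :
    PLR x * P x = P x * PLR x ↔
      ∀ DL DR : Matrix (Fin N) (Fin N) ℂ,
        HasDerivAt (fun s => PR (s, x.2) * P (s, x.2) - P (s, x.2) * PR (s, x.2)) DL x.1 →
        HasDerivAt (fun s => PL (x.1, s) * P (x.1, s) - P (x.1, s) * PL (x.1, s)) DR x.2 →
        DL + DR = 0 :=
  stmt_2_general P PL PR PLR hPL hPR hPLR hPRL x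
end

section
/- For a Hermitian idempotent P satisfying the Euler–Lagrange equation [∂_L∂_R P, P] = 0, the quantity J_L = (1/2) tr(∂_L P · ∂_L P) is independent of ξ_R, i.e., ∂_R J_L = 0. -/
/-!
Differentiating `P² = P` in `ξ_L` shows that `P_L := ∂_L P` satisfies `P_L P + P P_L = P_L`, hence
`P P_L P = 0`. Then `∂_R J_L = tr(P_LR P_L)`, and for `B = P_LR` commuting with `P`,
`tr(B P_L) = tr(B P_L P) + tr(B P P_L) = 2 tr(B P P_L) = 2 tr(P P_L P B) = 0`.
-/

attribute [local instance] Matrix.frobeniusNormedAddCommGroup Matrix.frobeniusNormedSpace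
attribute [local instance] Matrix.frobeniusNormedRing Matrix.frobeniusNormedAlgebra

open Matrix

theorem IsIdempotentElem.mul_mul_eq_zero_of_mul_add_mul_eq_self {R : Type*} [NonUnitalRing R]
    {p a : R} (hp : IsIdempotentElem p) (ha : a * p + p * a = a) : p * a * p = 0 := by
  have h : p * a * p + p * a * p = p * a * p := calc
    p * a * p + p * a * p = p * a * (p * p) + p * p * a * p := by rw [hp.eq]
    _ = p * (a * p + p * a) * p := by noncomm_ring
    _ = p * a * p := by rw [ha]
  exact add_eq_left.mp h

theorem Matrix.trace_mul_eq_zero_of_commute_of_mul_add_mul_eq_self {n R : Type*} [Fintype n]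
    [CommRing R] {P A B : Matrix n n R} (hP : IsIdempotentElem P) (hA : A * P + P * A = A)
    (hB : Commute B P) : (B * A).trace = 0 := by
  have hPAP : P * A * P = 0 := hP.mul_mul_eq_zero_of_mul_add_mul_eq_self hA
  have hsplit : (B * A).trace = (B * (A * P)).trace + (B * (P * A)).trace := by
    rw [← trace_add, ← mul_add, hA]
  have hcycle : (B * (A * P)).trace = (B * (P * A)).trace := by
    rw [← mul_assoc, trace_mul_comm, ← mul_assoc, ← hB.eq, mul_assoc]
  have hvanish : (B * (P * A)).trace = 0 := calc
    (B * (P * A)).trace = (B * P * (P * A)).trace := by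
      rw [mul_assoc B P, ← mul_assoc P P, hP.eq]
    _ = (P * A * (P * B)).trace := by rw [trace_mul_comm, hB.eq]
    _ = 0 := by rw [← mul_assoc, hPAP, zero_mul, trace_zero]
  rw [hsplit, hcycle, hvanish, add_zero]

section Calculus

variable {𝕜 : Type*} [NontriviallyNormedField 𝕜] {n : Type*} [Fintype n]

theorem HasDerivAt.matrix_trace {α : Type*} [NormedAddCommGroup α] [NormedSpace 𝕜 α]
    {f : 𝕜 → Matrix n n α} {f' : Matrix n n α} {t : 𝕜} (hf : HasDerivAt f f' t) :
    HasDerivAt (fun s => (f s).trace) f'.trace t :=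
  let traceCLM : Matrix n n α →L[𝕜] α := ⟨traceLinearMap n 𝕜 α, continuous_id.matrix_trace⟩
  traceCLM.hasFDerivAt.comp_hasDerivAt t hf

variable {α : Type*} [RCLike α] [NormedAlgebra 𝕜 α] [DecidableEq n]

theorem HasDerivAt.mul_add_mul_eq_self_of_isIdempotentElem {f : 𝕜 → Matrix n n α}
    {f' : Matrix n n α} {t : 𝕜} (hf : HasDerivAt f f' t) (hidem : ∀ s, IsIdempotentElem (f s)) :
    f' * f t + f t * f' = f' := by
  have hff : f * f = f := funext hidem
  exact (hff ▸ hf.mul hf).unique hf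

end Calculus

theorem stmt_3_general {N : ℕ} (P PL PLR : ℝ × ℝ → Matrix (Fin N) (Fin N) ℂ)
    (hPL : ∀ x : ℝ × ℝ, HasDerivAt (fun s => P (s, x.2)) (PL x) x.1)
    (hPRL : ∀ x : ℝ × ℝ, HasDerivAt (fun s => PL (x.1, s)) (PLR x) x.2)
    (hidem : ∀ x, P x * P x = P x)
    (hEL : ∀ x, PLR x * P x = P x * PLR x) :
    ∀ x : ℝ × ℝ,
      HasDerivAt (fun s => (1/2 : ℂ) * (PL (x.1, s) * PL (x.1, s)).trace) 0 x.2 := by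
  intro x
  have hPL_tangent : PL x * P x + P x * PL x = PL x :=
    (hPL x).mul_add_mul_eq_self_of_isIdempotentElem fun s => hidem (s, x.2)
  have htrace : (PLR x * PL x).trace = 0 :=
    trace_mul_eq_zero_of_commute_of_mul_add_mul_eq_self (hidem x) hPL_tangent (hEL x)
  have hzero : (1 / 2 : ℂ) * (PLR x * PL x + PL x * PLR x).trace = 0 := by
    rw [trace_add, trace_mul_comm (PL x), htrace, add_zero, mul_zero]
  exact hzero ▸ (((hPRL x).mul (hPRL x)).matrix_trace).const_mul (1 / 2 : ℂ)

/-- For a Hermitian idempotent P satisfying [∂_L∂_R P, P] = 0,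
J_L = (1/2) tr(∂_L P · ∂_L P) satisfies ∂_R J_L = 0. -/
theorem stmt_3 {N : ℕ} (P PL PR PLR : ℝ × ℝ → Matrix (Fin N) (Fin N) ℂ)
    (hPL : ∀ x : ℝ × ℝ, HasDerivAt (fun s => P (s, x.2)) (PL x) x.1)
    (hPR : ∀ x : ℝ × ℝ, HasDerivAt (fun s => P (x.1, s)) (PR x) x.2)
    (hPLR : ∀ x : ℝ × ℝ, HasDerivAt (fun s => PR (s, x.2)) (PLR x) x.1)
    (hPRL : ∀ x : ℝ × ℝ, HasDerivAt (fun s => PL (x.1, s)) (PLR x) x.2)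
    (hidem : ∀ x, P x * P x = P x)
    (hherm : ∀ x, (P x)ᴴ = P x)
    (hEL : ∀ x, PLR x * P x = P x * PLR x) :
    ∀ x : ℝ × ℝ,
      HasDerivAt (fun s => (1/2 : ℂ) * (PL (x.1, s) * PL (x.1, s)).trace) 0 x.2 :=
  stmt_3_general P PL PLR hPL hPRL hidem hEL
end

section
/- If a Hermitian idempotent P satisfies the Euler–Lagrange equation, then setting M_L = [∂_L P, P] and M_R = [∂_R P, P], one has ∂_L M_R + ∂_R M_L = 0. -/
attribute [local instance] Matrix.frobeniusNormedRing Matrix.frobeniusNormedAlgebra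

theorem HasDerivAt.ringCommutator {𝕜 𝔸 : Type*} [NontriviallyNormedField 𝕜] [NormedRing 𝔸]
    [NormedAlgebra 𝕜 𝔸] {f g : 𝕜 → 𝔸} {f' g' : 𝔸} {x : 𝕜}
    (hf : HasDerivAt f f' x) (hg : HasDerivAt g g' x) :
    HasDerivAt (fun s => f s * g s - g s * f s) (⁅f', g x⁆ + ⁅f x, g'⁆) x := by
  refine ((hf.mul hg).sub (hg.mul hf)).congr_deriv ?_
  simp only [Ring.lie_def]
  abel

theorem stmt_4_general {N : ℕ} (P PL PR PLR : ℝ × ℝ → Matrix (Fin N) (Fin N) ℂ)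
    (hPL : ∀ x : ℝ × ℝ, HasDerivAt (fun s => P (s, x.2)) (PL x) x.1)
    (hPR : ∀ x : ℝ × ℝ, HasDerivAt (fun s => P (x.1, s)) (PR x) x.2)
    (hPLR : ∀ x : ℝ × ℝ, HasDerivAt (fun s => PR (s, x.2)) (PLR x) x.1)
    (hPRL : ∀ x : ℝ × ℝ, HasDerivAt (fun s => PL (x.1, s)) (PLR x) x.2)
    (hEL : ∀ x, PLR x * P x = P x * PLR x) :
    ∀ (x : ℝ × ℝ) (DL DR : Matrix (Fin N) (Fin N) ℂ),
      HasDerivAt (fun s => PR (s, x.2) * P (s, x.2) - P (s, x.2) * PR (s, x.2)) DL x.1 →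
      HasDerivAt (fun s => PL (x.1, s) * P (x.1, s) - P (x.1, s) * PL (x.1, s)) DR x.2 →
      DL + DR = 0 := by
  intro x DL DR hDL hDR
  have hL := (hPLR x).ringCommutator (hPL x)
  have hR := (hPRL x).ringCommutator (hPR x)
  simp only [Prod.mk.eta] at hL hR
  have hEL_lie : ⁅PLR x, P x⁆ = 0 := by rw [Ring.lie_def, hEL x, sub_self]
  -- The cross terms ⁅∂_R P, ∂_L P⁆ and ⁅∂_L P, ∂_R P⁆ cancel; the rest is 2 ⁅∂_L ∂_R P, P⁆ = 0.
  rw [hDL.unique hL, hDR.unique hR, hEL_lie]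
  simp only [Ring.lie_def]
  abel

/-- If a Hermitian idempotent P satisfies the Euler–Lagrange equation, then with
M_L = [∂_L P, P] and M_R = [∂_R P, P] one has ∂_L M_R + ∂_R M_L = 0. -/
theorem stmt_4 {N : ℕ} (P PL PR PLR : ℝ × ℝ → Matrix (Fin N) (Fin N) ℂ)
    (hPL : ∀ x : ℝ × ℝ, HasDerivAt (fun s => P (s, x.2)) (PL x) x.1)
    (hPR : ∀ x : ℝ × ℝ, HasDerivAt (fun s => P (x.1, s)) (PR x) x.2)
    (hPLR : ∀ x : ℝ × ℝ, HasDerivAt (fun s => PR (s, x.2)) (PLR x) x.1)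
    (hPRL : ∀ x : ℝ × ℝ, HasDerivAt (fun s => PL (x.1, s)) (PLR x) x.2)
    (hidem : ∀ x, P x * P x = P x)
    (hEL : ∀ x, PLR x * P x = P x * PLR x) :
    ∀ (x : ℝ × ℝ) (DL DR : Matrix (Fin N) (Fin N) ℂ),
      HasDerivAt (fun s => PR (s, x.2) * P (s, x.2) - P (s, x.2) * PR (s, x.2)) DL x.1 →
      HasDerivAt (fun s => PL (x.1, s) * P (x.1, s) - P (x.1, s) * PL (x.1, s)) DR x.2 →
      DL + DR = 0 :=
  stmt_4_general P PL PR PLR hPL hPR hPLR hPRL hEL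
end

section
/- The function w(ξ_L, ξ_R) = tanh(α)·e^{iβ} with α = (ξ_L/a − ξ_R/b − c)/4, β = (ξ_L/a + ξ_R/b − d)/2 solves the CP¹ Euler–Lagrange equation ∂_L∂_R w (1+|w|²) = 2w̄ ∂_L w ∂_R w. -/
/-!
Along the ansatz `w = P(α) e^{iβ}` the partial derivatives act on the profile alone:
`∂_L` and `∂_R` send `P` to `(P'/4 + iP/2)/a` and `(-P'/4 + iP/2)/b`, so the mixed derivative has
profile `-(P''/16 + P/4)/(ab)`, the phase terms cancelling. As `|e^{iβ}| = 1`, the equation for a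
real profile becomes the ODE `P''(1 + P²) = 2P P'² - 4P(1 - P²)`, which `tanh` solves because
`tanh' = 1 - tanh²` and `tanh'' = -2 tanh (1 - tanh²)`.
-/

/-- Partial derivative in the first (left light-cone) variable. -/
noncomputable def pdL (f : ℝ × ℝ → ℂ) (x : ℝ × ℝ) : ℂ :=
  deriv (fun s => f (s, x.2)) x.1

/-- Partial derivative in the second (right light-cone) variable. -/
noncomputable def pdR (f : ℝ × ℝ → ℂ) (x : ℝ × ℝ) : ℂ :=
  deriv (fun s => f (x.1, s)) x.2

open Complex

theorem Real.hasDerivAt_tanh (x : ℝ) : HasDerivAt Real.tanh (1 - Real.tanh x ^ 2) x := by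
  have hcosh : Real.cosh x ≠ 0 := (Real.cosh_pos x).ne'
  rw [show Real.tanh = Real.sinh / Real.cosh from funext Real.tanh_eq_sinh_div_cosh]
  refine ((Real.hasDerivAt_sinh x).div (Real.hasDerivAt_cosh x) hcosh).congr_deriv ?_
  rw [Pi.div_apply, div_pow, one_sub_div (pow_ne_zero 2 hcosh)]
  ring

theorem HasDerivAt.comp_mul_cexp_I_mul {P : ℝ → ℂ} {P' : ℂ} {α β : ℝ → ℝ} {α' β' t : ℝ}
    (hP : HasDerivAt P P' (α t)) (hα : HasDerivAt α α' t) (hβ : HasDerivAt β β' t) :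
    HasDerivAt (fun s => P (α s) * Complex.exp (I * (β s : ℂ)))
      (((α' : ℂ) * P' + I * (β' : ℂ) * P (α t)) * Complex.exp (I * (β t : ℂ))) t := by
  have hE : HasDerivAt (fun s => Complex.exp (I * (β s : ℂ)))
      (Complex.exp (I * (β t : ℂ)) * (I * (β' : ℂ))) t :=
    (hβ.ofReal_comp.const_mul I).cexp
  refine ((hP.scomp t hα).mul hE).congr_deriv ?_
  rw [real_smul, Function.comp_apply]
  ring

noncomputable def phaseWave (a b c d : ℝ) (P : ℝ → ℂ) (x : ℝ × ℝ) : ℂ :=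
  P ((x.1 / a - x.2 / b - c) / 4) * exp (I * (((x.1 / a + x.2 / b - d) / 2 : ℝ) : ℂ))

section phaseWave

variable (a b c d : ℝ) {P P' P'' : ℝ → ℂ}

theorem pdL_phaseWave (hP : ∀ s, HasDerivAt P (P' s) s) :
    pdL (phaseWave a b c d P) = phaseWave a b c d (fun s => (P' s / 4 + I * P s / 2) / a) := by
  funext x
  have hα : HasDerivAt (fun s : ℝ => (s / a - x.2 / b - c) / 4) (1 / a / 4) x.1 :=
    ((((hasDerivAt_id x.1).div_const a).sub_const _).sub_const c).div_const 4
  have hβ : HasDerivAt (fun s : ℝ => (s / a + x.2 / b - d) / 2) (1 / a / 2) x.1 :=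
    ((((hasDerivAt_id x.1).div_const a).add_const _).sub_const d).div_const 2
  refine (HasDerivAt.comp_mul_cexp_I_mul (hP _) hα hβ).deriv.trans ?_
  simp only [phaseWave]
  push_cast
  ring

theorem pdR_phaseWave (hP : ∀ s, HasDerivAt P (P' s) s) :
    pdR (phaseWave a b c d P) = phaseWave a b c d (fun s => (-P' s / 4 + I * P s / 2) / b) := by
  funext x
  have hα : HasDerivAt (fun s : ℝ => (x.1 / a - s / b - c) / 4) (-(1 / b) / 4) x.2 :=
    ((((hasDerivAt_id x.2).div_const b).const_sub _).sub_const c).div_const 4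
  have hβ : HasDerivAt (fun s : ℝ => (x.1 / a + s / b - d) / 2) (1 / b / 2) x.2 :=
    ((((hasDerivAt_id x.2).div_const b).const_add _).sub_const d).div_const 2
  refine (HasDerivAt.comp_mul_cexp_I_mul (hP _) hα hβ).deriv.trans ?_
  simp only [phaseWave]
  push_cast
  ring

theorem pdL_pdR_phaseWave (hP : ∀ s, HasDerivAt P (P' s) s) (hP' : ∀ s, HasDerivAt P' (P'' s) s) :
    pdL (pdR (phaseWave a b c d P)) =
      phaseWave a b c d (fun s => -(P'' s / 16 + P s / 4) / (a * b)) := by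
  have hQ : ∀ s, HasDerivAt (fun s => (-P' s / 4 + I * P s / 2) / b)
      ((-P'' s / 4 + I * P' s / 2) / b) s := fun s =>
    (((hP' s).neg.div_const 4).add (((hP s).const_mul I).div_const 2)).div_const _
  rw [pdR_phaseWave a b c d hP, pdL_phaseWave a b c d hQ]
  congr 1
  funext s
  linear_combination P s / (4 * a * b) * I_sq

end phaseWave

theorem stmt_12_general (a b c d : ℝ)
    (w : ℝ × ℝ → ℂ)
    (hw : ∀ x : ℝ × ℝ, w x =
      ((Real.tanh ((x.1 / a - x.2 / b - c) / 4) : ℝ) : ℂ) *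
        Complex.exp (Complex.I * (((x.1 / a + x.2 / b - d) / 2 : ℝ) : ℂ)))
    (x : ℝ × ℝ) :
    pdL (pdR w) x * (1 + w x * starRingEnd ℂ (w x)) =
      2 * starRingEnd ℂ (w x) * pdL w x * pdR w x := by
  set T : ℝ → ℂ := fun s => (Real.tanh s : ℂ)
  have hT : ∀ s, HasDerivAt T (1 - T s ^ 2) s := fun s => by
    simpa [T] using (Real.hasDerivAt_tanh s).ofReal_comp
  have hT' : ∀ s, HasDerivAt (fun s => 1 - T s ^ 2) (-2 * T s * (1 - T s ^ 2)) s := fun s =>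
    ((hT s).pow 2).const_sub 1 |>.congr_deriv (by push_cast; ring)
  have hw_eq : w = phaseWave a b c d T := funext hw
  rw [hw_eq, pdL_pdR_phaseWave a b c d hT hT', pdL_phaseWave a b c d hT, pdR_phaseWave a b c d hT]
  have hE := RCLike.mul_conj (exp (I * (((x.1 / a + x.2 / b - d) / 2 : ℝ) : ℂ)))
  rw [norm_exp_I_mul_ofReal, RCLike.ofReal_one, one_pow] at hE
  simp only [phaseWave, map_mul, T, conj_ofReal]
  set t := ((Real.tanh ((x.1 / a - x.2 / b - c) / 4) : ℝ) : ℂ)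
  set E := exp (I * (((x.1 / a + x.2 / b - d) / 2 : ℝ) : ℂ))
  linear_combination (t + t ^ 3) * (a : ℂ)⁻¹ * (b : ℂ)⁻¹ * E / 8 * hE
    - t ^ 3 * (a : ℂ)⁻¹ * (b : ℂ)⁻¹ * E ^ 2 * starRingEnd ℂ E / 2 * I_sq

/-- w = tanh(α) e^{iβ}, α = (ξ_L/a − ξ_R/b − c)/4, β = (ξ_L/a + ξ_R/b − d)/2, solves the
CP¹ Euler–Lagrange equation ∂_L∂_R w (1+|w|²) = 2 w̄ ∂_L w ∂_R w. -/
theorem stmt_12 (a b c d : ℝ) (ha : a ≠ 0) (hb : b ≠ 0)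
    (w : ℝ × ℝ → ℂ)
    (hw : ∀ x : ℝ × ℝ, w x =
      ((Real.tanh ((x.1 / a - x.2 / b - c) / 4) : ℝ) : ℂ) *
        Complex.exp (Complex.I * (((x.1 / a + x.2 / b - d) / 2 : ℝ) : ℂ)))
    (x : ℝ × ℝ) :
    pdL (pdR w) x * (1 + w x * starRingEnd ℂ (w x)) =
      2 * starRingEnd ℂ (w x) * pdL w x * pdR w x :=
  stmt_12_general a b c d w hw x
end
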